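/- Let X be a discrete metric space with bounded geometry, ε > 0, L > 0, and suppose T ∈ B(ℓ²(X)) satisfies ‖[T,f]‖ < ε for every L-Lipschitz f ∈ ℓ∞(X) of norm 1. Let v ∈ ℓ²(X) be a unit vector and set V := { x ∈ X : d(x, supp v) < 1/L }. Then ‖T v‖ ≤ ‖χ_V (T v)‖ + ε. -/

import Mathlib

open scoped ENNReal
open Metric Set Function

noncomputable section

variable {X : Type*}

/-- The pointwise product of an `ℓ∞` function and an `ℓ²` function is again `ℓ²`. -/
theorem memℓp_two_mul (f : lp (fun _ : X => ℂ) ∞) (ξ : lp (fun _ : X => ℂ) 2) :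
    Memℓp (fun x => f x * ξ x) 2 := by
  apply memℓp_gen
  have h2 : (2 : ℝ≥0∞).toReal = 2 := by norm_num
  rw [h2]
  have hsum : Summable fun x => ‖f‖ ^ (2:ℝ) * ‖ξ x‖ ^ (2:ℝ) :=
    (by simpa [h2] using (lp.memℓp ξ).summable (by rw [h2]; norm_num) :
      Summable fun x => ‖ξ x‖ ^ (2:ℝ)).mul_left _
  refine Summable.of_nonneg_of_le (fun x => by positivity) (fun x => ?_) hsum
  have h1 : ‖f x * ξ x‖ ≤ ‖f‖ * ‖ξ x‖ := by
    rw [norm_mul]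
    exact mul_le_mul_of_nonneg_right (lp.norm_apply_le_norm (by norm_num) f x) (norm_nonneg _)
  calc ‖f x * ξ x‖ ^ (2:ℝ) ≤ (‖f‖ * ‖ξ x‖) ^ (2:ℝ) := by
        gcongr
    _ = ‖f‖ ^ (2:ℝ) * ‖ξ x‖ ^ (2:ℝ) := by
        rw [Real.mul_rpow (norm_nonneg _) (norm_nonneg _)]

/-- Multiplication by a bounded function `f ∈ ℓ∞(X)`, as a bounded operator on `ℓ²(X)`. -/
def mulOp (f : lp (fun _ : X => ℂ) ∞) :
    lp (fun _ : X => ℂ) 2 →L[ℂ] lp (fun _ : X => ℂ) 2 :=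
  LinearMap.mkContinuous
    { toFun := fun ξ => ⟨fun x => f x * ξ x, memℓp_two_mul f ξ⟩
      map_add' := fun ξ η => Subtype.ext <| funext fun x => by
        simp only [lp.coeFn_add, Pi.add_apply, mul_add]
      map_smul' := fun c ξ => Subtype.ext <| funext fun x => by
        simp only [lp.coeFn_smul, Pi.smul_apply, smul_eq_mul, RingHom.id_apply]
        ring }
    ‖f‖ (by
      intro ξ
      refine lp.norm_le_of_forall_sum_le (by norm_num) (by positivity) fun s => ?_
      have hb : ∀ x ∈ s, ‖f x * ξ x‖ ^ ((2:ℝ≥0∞).toReal)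
          ≤ ‖f‖ ^ ((2:ℝ≥0∞).toReal) * ‖ξ x‖ ^ ((2:ℝ≥0∞).toReal) := by
        intro x _
        rw [← Real.mul_rpow (norm_nonneg _) (norm_nonneg _)]
        refine Real.rpow_le_rpow (norm_nonneg _) ?_ (by norm_num)
        rw [norm_mul]
        exact mul_le_mul_of_nonneg_right (lp.norm_apply_le_norm (by norm_num) f x) (norm_nonneg _)
      calc ∑ x ∈ s, ‖f x * ξ x‖ ^ ((2:ℝ≥0∞).toReal)
          ≤ ∑ x ∈ s, ‖f‖ ^ ((2:ℝ≥0∞).toReal) * ‖ξ x‖ ^ ((2:ℝ≥0∞).toReal) :=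
            Finset.sum_le_sum hb
        _ = ‖f‖ ^ ((2:ℝ≥0∞).toReal) * ∑ x ∈ s, ‖ξ x‖ ^ ((2:ℝ≥0∞).toReal) := by
            rw [Finset.mul_sum]
        _ ≤ ‖f‖ ^ ((2:ℝ≥0∞).toReal) * ‖ξ‖ ^ ((2:ℝ≥0∞).toReal) :=
            mul_le_mul_of_nonneg_left (lp.sum_rpow_le_norm_rpow (by norm_num) ξ s)
              (Real.rpow_nonneg (norm_nonneg _) _)
        _ = (‖f‖ * ‖ξ‖) ^ ((2:ℝ≥0∞).toReal) :=
            (Real.mul_rpow (norm_nonneg _) (norm_nonneg _)).symm)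

/-- The indicator function of a set `A ⊆ X`, as an element of `ℓ∞(X)`. -/
def indLp (A : Set X) : lp (fun _ : X => ℂ) ∞ :=
  ⟨fun x => A.indicator (fun _ => (1 : ℂ)) x,
    memℓp_infty ⟨1, by
      rintro r ⟨x, rfl⟩
      by_cases h : x ∈ A <;> simp [Set.indicator_of_mem, Set.indicator_of_notMem, h]⟩⟩

/-- Multiplication by the characteristic function of `A ⊆ X` on `ℓ²(X)`. -/
def indOp (A : Set X) :
    lp (fun _ : X => ℂ) 2 →L[ℂ] lp (fun _ : X => ℂ) 2 :=
  mulOp (indLp A)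


/- The cutoff `x ↦ max 0 (1 - L d(x, supp v))` is a norm-one `L`-Lipschitz function `f` with
`f v = v` that vanishes off `V`. Hence `T v = [T, f] v + f (T v)`, where the first term has norm
`< ε` and the second is dominated pointwise by `χ_V (T v)`. -/

section Commutator

variable {𝕜 E : Type*} [NontriviallyNormedField 𝕜] [SeminormedAddCommGroup E] [NormedSpace 𝕜 E]

theorem norm_apply_le_norm_commutator_mul_add (T M : E →L[𝕜] E) {v : E} (hv : M v = v) :
    ‖T v‖ ≤ ‖T ∘L M - M ∘L T‖ * ‖v‖ + ‖M (T v)‖ :=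
  calc ‖T v‖ = ‖(T ∘L M - M ∘L T) v + M (T v)‖ := by simp [hv]
    _ ≤ ‖T ∘L M - M ∘L T‖ * ‖v‖ + ‖M (T v)‖ :=
      norm_add_le_of_le ((T ∘L M - M ∘L T).le_opNorm v) le_rfl

end Commutator

section MulOp

theorem mulOp_apply (f : lp (fun _ : X => ℂ) ∞) (ξ : lp (fun _ : X => ℂ) 2) (x : X) :
    mulOp f ξ x = f x * ξ x :=
  rfl

theorem mulOp_eq_self {f : lp (fun _ : X => ℂ) ∞} {ξ : lp (fun _ : X => ℂ) 2}
    (hf : ∀ x ∈ support ξ, f x = 1) : mulOp f ξ = ξ := by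
  ext x
  rw [mulOp_apply]
  by_cases hx : x ∈ support ξ
  · rw [hf x hx, one_mul]
  · rw [notMem_support.mp hx, mul_zero]

theorem norm_mulOp_le_norm_indOp {f : lp (fun _ : X => ℂ) ∞} {V : Set X}
    (hf_le : ∀ x, ‖f x‖ ≤ 1) (hf_zero : ∀ x ∉ V, f x = 0) (ξ : lp (fun _ : X => ℂ) 2) :
    ‖mulOp f ξ‖ ≤ ‖indOp V ξ‖ := by
  refine lp.norm_mono two_ne_zero fun x => ?_
  simp only [indOp, mulOp_apply, indLp, norm_mul]
  by_cases hx : x ∈ V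
  · simpa [indicator_of_mem hx] using
      mul_le_mul_of_nonneg_right (hf_le x) (norm_nonneg (ξ x))
  · rw [hf_zero x hx, norm_zero, zero_mul]
    positivity

end MulOp

section ThickenedIndicator

variable [PseudoMetricSpace X] {δ : ℝ} (hδ : 0 < δ) (A : Set X)

/-- For `δ = 1 / L` this is the cutoff `x ↦ max 0 (1 - L d(x, A))`. -/
def thickenedIndicatorLp : lp (fun _ : X => ℂ) ∞ :=
  ⟨fun x => ((thickenedIndicator hδ A x : ℝ) : ℂ), memℓp_infty ⟨1, by
    rintro r ⟨x, rfl⟩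
    simpa using thickenedIndicator_le_one hδ A x⟩⟩

theorem thickenedIndicatorLp_apply (x : X) :
    thickenedIndicatorLp hδ A x = ((thickenedIndicator hδ A x : ℝ) : ℂ) :=
  rfl

theorem norm_thickenedIndicatorLp_apply_le_one (x : X) :
    ‖thickenedIndicatorLp hδ A x‖ ≤ 1 := by
  simpa [thickenedIndicatorLp_apply] using thickenedIndicator_le_one hδ A x

theorem thickenedIndicatorLp_of_mem {x : X} (hx : x ∈ A) : thickenedIndicatorLp hδ A x = 1 := by
  simp [thickenedIndicatorLp_apply, thickenedIndicator_one hδ A hx]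

theorem thickenedIndicatorLp_of_notMem {x : X} (hx : x ∉ thickening δ A) :
    thickenedIndicatorLp hδ A x = 0 := by
  simp [thickenedIndicatorLp_apply, thickenedIndicator_zero hδ A hx]

theorem norm_thickenedIndicatorLp {A : Set X} (hA : A.Nonempty) :
    ‖thickenedIndicatorLp hδ A‖ = 1 := by
  obtain ⟨x, hx⟩ := hA
  refine le_antisymm (lp.norm_le_of_forall_le zero_le_one
    (norm_thickenedIndicatorLp_apply_le_one hδ A)) ?_
  simpa [thickenedIndicatorLp_of_mem hδ A hx] using
    lp.norm_apply_le_norm ENNReal.top_ne_zero (thickenedIndicatorLp hδ A) x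

theorem norm_thickenedIndicatorLp_sub_le (x y : X) :
    ‖thickenedIndicatorLp hδ A x - thickenedIndicatorLp hδ A y‖ ≤ δ⁻¹ * dist x y := by
  simpa [thickenedIndicatorLp_apply, ← Complex.ofReal_sub, hδ.le, NNReal.dist_eq] using
    (lipschitzWith_thickenedIndicator hδ A).dist_le_mul x y

end ThickenedIndicator

theorem commutant_support_estimate_general [MetricSpace X]
    (ε L : ℝ) (hL : 0 < L)
    (T : lp (fun _ : X => ℂ) 2 →L[ℂ] lp (fun _ : X => ℂ) 2)
    (hT : ∀ f : lp (fun _ : X => ℂ) ∞, ‖f‖ = 1 →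
      (∀ x y : X, ‖f x - f y‖ ≤ L * dist x y) →
      ‖T ∘L mulOp f - mulOp f ∘L T‖ < ε)
    (v : lp (fun _ : X => ℂ) 2) (hv : ‖v‖ = 1) :
    ‖T v‖ ≤
      ‖indOp {x : X | Metric.infDist x (Function.support (⇑v : X → ℂ)) < 1 / L} (T v)‖ + ε := by
  set A := Function.support (⇑v : X → ℂ)
  set V := {x : X | Metric.infDist x A < 1 / L}
  have hδ : 0 < 1 / L := one_div_pos.mpr hL
  have hA : A.Nonempty :=
    support_nonempty_iff.mpr fun h => by simp [show v = 0 from lp.ext h] at hv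
  set f := thickenedIndicatorLp hδ A
  have hf_lip : ∀ x y : X, ‖f x - f y‖ ≤ L * dist x y := fun x y =>
    (norm_thickenedIndicatorLp_sub_le hδ A x y).trans_eq (by rw [one_div, inv_inv])
  have hf_zero : ∀ x ∉ V, f x = 0 := fun x hx =>
    thickenedIndicatorLp_of_notMem hδ A fun hx' => hx ((mem_thickening_iff_infDist_lt hA).mp hx')
  calc ‖T v‖ ≤ ‖T ∘L mulOp f - mulOp f ∘L T‖ * ‖v‖ + ‖mulOp f (T v)‖ :=
        norm_apply_le_norm_commutator_mul_add T _
          (mulOp_eq_self fun x hx => thickenedIndicatorLp_of_mem hδ A hx)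
    _ ≤ ε * 1 + ‖indOp V (T v)‖ := by
        rw [hv]
        gcongr
        · exact (hT f (norm_thickenedIndicatorLp hδ hA) hf_lip).le
        · exact norm_mulOp_le_norm_indOp (norm_thickenedIndicatorLp_apply_le_one hδ A) hf_zero _
    _ = ‖indOp V (T v)‖ + ε := by ring

/-- if `T` `ε`-commutes with every norm-one `L`-Lipschitz function, then for
any unit vector `v`, the vector `T v` is `ε`-supported on the `1/L`-neighbourhood of the
support of `v`. -/
theorem commutant_support_estimate [MetricSpace X]
    (ε L : ℝ) (hε : 0 < ε) (hL : 0 < L)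
    (T : lp (fun _ : X => ℂ) 2 →L[ℂ] lp (fun _ : X => ℂ) 2)
    (hT : ∀ f : lp (fun _ : X => ℂ) ∞, ‖f‖ = 1 →
      (∀ x y : X, ‖f x - f y‖ ≤ L * dist x y) →
      ‖T ∘L mulOp f - mulOp f ∘L T‖ < ε)
    (v : lp (fun _ : X => ℂ) 2) (hv : ‖v‖ = 1) :
    ‖T v‖ ≤
      ‖indOp {x : X | Metric.infDist x (Function.support (⇑v : X → ℂ)) < 1 / L} (T v)‖ + ε :=
  commutant_support_estimate_general ε L hL T hT v hv
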